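/- arXiv:2006.08167 — 3 statements merged into one kernel-verified Lean document; each statement's English description precedes it below -/
import Mathlib

section
/- Let φ_t be nonnegative reals satisfying φ_t ≤ (1 − 2/(t+3)) φ_{t−1} + C/(t+3)² for all t ≥ 1, where C ≥ 0. Then φ_t ≤ (6 φ_0)/((t+2)(t+3)) + C/(t+3) for all t ≥ 0. -/
/-- The key recursion in the stochastic Frank–Wolfe analysis: if
`φ_t ≤ (1 − 2/(t+3)) φ_{t−1} + C/(t+3)²` for all `t ≥ 1`, then
`φ_t ≤ 6φ_0/((t+2)(t+3)) + C/(t+3)` for all `t ≥ 0`. -/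
theorem sfw_recursion_bound
    (φ : ℕ → ℝ) (C : ℝ) (hC : 0 ≤ C) (hφ : ∀ t, 0 ≤ φ t)
    (hrec : ∀ t : ℕ, 1 ≤ t →
      φ t ≤ (1 - 2 / ((t : ℝ) + 3)) * φ (t - 1) + C / ((t : ℝ) + 3) ^ 2) :
    ∀ t : ℕ, φ t ≤ 6 * φ 0 / (((t : ℝ) + 2) * ((t : ℝ) + 3)) + C / ((t : ℝ) + 3) := by
  intro t
  induction t with
  | zero =>
    norm_num
    nlinarith [hφ 0]
  | succ n ih =>
    have h := hrec (n + 1) (by omega)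
    simp only [Nat.add_sub_cancel] at h
    push_cast at h ⊢
    have hn : (0:ℝ) ≤ (n:ℝ) := Nat.cast_nonneg n
    have h3 : ((n:ℝ) + 3) ≠ 0 := by positivity
    have h4 : ((n:ℝ) + 4) ≠ 0 := by positivity
    have h2 : ((n:ℝ) + 2) ≠ 0 := by positivity
    have hcoef : (0:ℝ) ≤ 1 - 2 / ((n:ℝ) + 1 + 3) := by
      rw [sub_nonneg, div_le_one (by linarith)]; linarith
    have step : φ (n + 1) ≤ (1 - 2 / ((n:ℝ) + 1 + 3)) *
        (6 * φ 0 / (((n:ℝ) + 2) * ((n:ℝ) + 3)) + C / ((n:ℝ) + 3))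
        + C / ((n:ℝ) + 1 + 3) ^ 2 := by
      calc φ (n + 1) ≤ (1 - 2 / ((n:ℝ) + 1 + 3)) * φ n + C / ((n:ℝ) + 1 + 3) ^ 2 := h
        _ ≤ _ := by gcongr
    refine step.trans ?_
    have diff : (6 * φ 0 / (((n:ℝ) + 1 + 2) * ((n:ℝ) + 1 + 3)) + C / ((n:ℝ) + 1 + 3)) -
        ((1 - 2 / ((n:ℝ) + 1 + 3)) *
          (6 * φ 0 / (((n:ℝ) + 2) * ((n:ℝ) + 3)) + C / ((n:ℝ) + 3))
          + C / ((n:ℝ) + 1 + 3) ^ 2)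
        = C / (((n:ℝ) + 3) * ((n:ℝ) + 4) ^ 2) := by
      have h14 : ((n:ℝ) + 1 + 3) ≠ 0 := by positivity
      field_simp
      ring
    have hpos : (0:ℝ) ≤ C / (((n:ℝ) + 3) * ((n:ℝ) + 4) ^ 2) := by positivity
    linarith
end

section
/- Let (φ_t)_{t≥0} be nonnegative with φ_0 ≤ K L D²/2 and, for all t ≥ 1, φ_t ≤ 6LD²/(t+2)² + (3 + 3K/2)LD²/((t+1)(t+2)) + (1/(t(t+1)(t+2))) Σ_{k=1}^t (k−1)φ_{k−1}. Then for all t ≥ 0, φ_t ≤ 6LD²/(t+2)² + (12 + 3K)LD²/((t+1)(t+2)). -/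
open Finset

lemma sum_Icc_one_pred_eq_sum_range (φ : ℕ → ℝ) (t : ℕ) :
    ∑ k ∈ Icc 1 t, ((k : ℝ) - 1) * φ (k - 1) = ∑ s ∈ range t, (s : ℝ) * φ s := by
  rw [← Ico_add_one_right_eq_Icc, sum_Ico_eq_sum_range, Nat.add_sub_cancel]
  refine sum_congr rfl fun s _ => ?_
  simp only [Nat.add_sub_cancel_left, Nat.cast_add, Nat.cast_one, add_sub_cancel_left]

lemma mul_bound_le_half {a B s : ℝ} (ha : 0 ≤ a) (hB : 0 ≤ B) (hs : 0 ≤ s) :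
    s * (a / (s + 2) ^ 2 + B / ((s + 1) * (s + 2))) ≤ (a + B) / 2 := by
  have hquad : s * (a / (s + 2) ^ 2) ≤ a / 2 := by
    rw [mul_div_assoc', div_le_div_iff₀ (by positivity) two_pos]
    nlinarith [mul_nonneg ha (sq_nonneg s)]
  have hlin : s * (B / ((s + 1) * (s + 2))) ≤ B / 2 := by
    rw [mul_div_assoc', div_le_div_iff₀ (by positivity) two_pos]
    nlinarith [mul_nonneg hB (sq_nonneg s), mul_nonneg hB hs]
  linarith

/-- The constant `a + 2b` is the fixed point of the induction: if every earlier `s φ_s` is at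
most `(a + (a + 2b))/2 = a + b`, the averaged term contributes `(a + b)/((t+1)(t+2))`, and
`b + (a + b) = a + 2b`. -/
theorem le_of_le_averaged_recursion {a b : ℝ} (ha : 0 ≤ a) (hab : 0 ≤ a + 2 * b) (φ : ℕ → ℝ)
    (h0 : φ 0 ≤ a / 4 + (a + 2 * b) / 2)
    (hrec : ∀ t : ℕ, 1 ≤ t →
      φ t ≤ a / ((t : ℝ) + 2) ^ 2 + b / (((t : ℝ) + 1) * ((t : ℝ) + 2))
        + (1 / ((t : ℝ) * ((t : ℝ) + 1) * ((t : ℝ) + 2)))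
            * ∑ k ∈ Icc 1 t, ((k : ℝ) - 1) * φ (k - 1)) (t : ℕ) :
    φ t ≤ a / ((t : ℝ) + 2) ^ 2 + (a + 2 * b) / (((t : ℝ) + 1) * ((t : ℝ) + 2)) := by
  induction t using Nat.strong_induction_on with
  | _ t ih =>
    rcases Nat.eq_zero_or_pos t with rfl | ht
    · norm_num at h0 ⊢
      linarith
    have hterm : ∀ s ∈ range t, (s : ℝ) * φ s ≤ a + b := fun s hs => calc
      (s : ℝ) * φ s
        ≤ s * (a / ((s : ℝ) + 2) ^ 2 + (a + 2 * b) / (((s : ℝ) + 1) * ((s : ℝ) + 2))) :=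
          mul_le_mul_of_nonneg_left (ih s (mem_range.mp hs)) s.cast_nonneg
      _ ≤ (a + (a + 2 * b)) / 2 := mul_bound_le_half ha hab s.cast_nonneg
      _ = a + b := by ring
    have hsum : ∑ s ∈ range t, (s : ℝ) * φ s ≤ t * (a + b) := by
      simpa [mul_add] using sum_le_card_nsmul _ _ _ hterm
    have htpos : (0 : ℝ) < t := Nat.cast_pos.mpr ht
    have havg : (1 / ((t : ℝ) * ((t : ℝ) + 1) * ((t : ℝ) + 2))) * ∑ s ∈ range t, (s : ℝ) * φ s
        ≤ (a + b) / (((t : ℝ) + 1) * ((t : ℝ) + 2)) := calc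
      _ ≤ (1 / ((t : ℝ) * ((t : ℝ) + 1) * ((t : ℝ) + 2))) * (t * (a + b)) :=
          mul_le_mul_of_nonneg_left hsum (by positivity)
      _ = (a + b) / (((t : ℝ) + 1) * ((t : ℝ) + 2)) := by field_simp
    have hsplit : (a + 2 * b) / (((t : ℝ) + 1) * ((t : ℝ) + 2))
        = b / (((t : ℝ) + 1) * ((t : ℝ) + 2)) + (a + b) / (((t : ℝ) + 1) * ((t : ℝ) + 2)) := by
      rw [← add_div]; ring
    have := hrec t ht
    rw [sum_Icc_one_pred_eq_sum_range] at this
    linarith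

theorem scgs_induction_bound_general
    (L D K : ℝ) (hL : 0 < L) (hD : 0 < D) (hK : 1 ≤ K)
    (φ : ℕ → ℝ) (h0 : φ 0 ≤ K * L * D ^ 2 / 2)
    (hrec : ∀ t : ℕ, 1 ≤ t →
      φ t ≤ 6 * L * D ^ 2 / ((t : ℝ) + 2) ^ 2
        + (3 + 3 * K / 2) * L * D ^ 2 / (((t : ℝ) + 1) * ((t : ℝ) + 2))
        + (1 / ((t : ℝ) * ((t : ℝ) + 1) * ((t : ℝ) + 2)))
            * ∑ k ∈ Finset.Icc 1 t, ((k : ℝ) - 1) * φ (k - 1)) :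
    ∀ t : ℕ, φ t ≤ 6 * L * D ^ 2 / ((t : ℝ) + 2) ^ 2
        + (12 + 3 * K) * L * D ^ 2 / (((t : ℝ) + 1) * ((t : ℝ) + 2)) := by
  have hLD : 0 < L * D ^ 2 := by positivity
  have hcoef : 6 * L * D ^ 2 + 2 * ((3 + 3 * K / 2) * L * D ^ 2) = (12 + 3 * K) * L * D ^ 2 := by
    ring
  intro t
  rw [← hcoef]
  refine le_of_le_averaged_recursion (by positivity) ?_ φ ?_ hrec t
  · rw [hcoef]; nlinarith
  · rw [hcoef]; nlinarith

/-- Induction at the heart of the stochastic conditional gradient sliding rate. -/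
theorem scgs_induction_bound
    (L D K : ℝ) (hL : 0 < L) (hD : 0 < D) (hK : 1 ≤ K)
    (φ : ℕ → ℝ) (hφ : ∀ t, 0 ≤ φ t) (h0 : φ 0 ≤ K * L * D ^ 2 / 2)
    (hrec : ∀ t : ℕ, 1 ≤ t →
      φ t ≤ 6 * L * D ^ 2 / ((t : ℝ) + 2) ^ 2
        + (3 + 3 * K / 2) * L * D ^ 2 / (((t : ℝ) + 1) * ((t : ℝ) + 2))
        + (1 / ((t : ℝ) * ((t : ℝ) + 1) * ((t : ℝ) + 2)))
            * ∑ k ∈ Finset.Icc 1 t, ((k : ℝ) - 1) * φ (k - 1)) :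
    ∀ t : ℕ, φ t ≤ 6 * L * D ^ 2 / ((t : ℝ) + 2) ^ 2
        + (12 + 3 * K) * L * D ^ 2 / (((t : ℝ) + 1) * ((t : ℝ) + 2)) :=
  scgs_induction_bound_general L D K hL hD hK φ h0 hrec
end

section
/- Let Ω be convex with diameter D and f L-smooth. For points x_{t−1}, y_{t−1}, y_t ∈ Ω set z_t = (1−γ)x_{t−1} + γ y_{t−1} and x_t = (1−γ)x_{t−1} + γ y_t with γ ∈ [0,1], β ≥ Lγ. If f is convex, then f(x_t) ≤ (1−γ) f(x_{t−1}) + γ[f(z_t) + ⟨∇f(z_t), y_t − z_t⟩] + (βγ/2)‖y_t − y_{t−1}‖² − (γ(β − Lγ)/2)‖y_t − y_{t−1}‖². -/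
/-! Write `z = (1 - γ) • x + γ • y'`, so that `(1 - γ) • x + γ • y = z + γ • (y - y')`. The descent
lemma for the `L`-Lipschitz gradient bounds `f` at this point by
`f z + γ ⟪∇f z, y - y'⟫ + (L γ² / 2) ‖y - y'‖²`. Since
`γ • (y - y') = (1 - γ) • (x - z) + γ • (y - z)`, the linear term splits, and the first-order
condition of convexity `f z + ⟪∇f z, x - z⟫ ≤ f x` absorbs its `(1 - γ)` part; the two
`β`-terms of the claim combine to exactly `(L γ² / 2) ‖y - y'‖²`. -/

open scoped RealInnerProductSpace NNReal

variable {E : Type*} [NormedAddCommGroup E] [InnerProductSpace ℝ E] {f : E → ℝ}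

theorem HasGradientAt.hasDerivAt_comp_add_smul [CompleteSpace E] {g a v : E} {t : ℝ}
    (hf : HasGradientAt f g (a + t • v)) :
    HasDerivAt (fun s : ℝ => f (a + s • v)) ⟪g, v⟫ t := by
  have hline : HasDerivAt (fun s : ℝ => a + s • v) v t := by
    simpa using ((hasDerivAt_id t).smul_const v).const_add a
  have hcomp := hf.hasFDerivAt.comp_hasDerivAt t hline
  simp only [Function.comp_def, InnerProductSpace.toDual_apply_apply] at hcomp
  exact hcomp

theorem ConvexOn.add_inner_gradient_le [CompleteSpace E] {s : Set E} (hf : ConvexOn ℝ s f)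
    {g p q : E} (hq : q ∈ s) (hp : p ∈ s) (hg : HasGradientAt f g q) :
    f q + ⟪g, p - q⟫ ≤ f p := by
  set line : ℝ →ᵃ[ℝ] E := AffineMap.lineMap q p
  have hline : ∀ t : ℝ, line t = q + t • (p - q) := fun t => by
    simp [line, AffineMap.lineMap_apply, add_comm]
  have hconv : ConvexOn ℝ (line ⁻¹' s) (fun t => f (q + t • (p - q))) := by
    simpa [Function.comp_def, hline] using hf.comp_affineMap line
  have hderiv : HasDerivAt (fun t : ℝ => f (q + t • (p - q))) ⟪g, p - q⟫ 0 :=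
    HasGradientAt.hasDerivAt_comp_add_smul (by simpa using hg)
  have hslope := hconv.le_slope_of_hasDerivAt (x := 0) (y := 1) (by simpa [hline] using hq)
    (by simpa [hline] using hp) one_pos hderiv
  simp only [slope_def_field, sub_zero, div_one, one_smul, zero_smul, add_zero,
    add_sub_cancel] at hslope
  linarith

theorem inner_sub_le_of_lipschitzWith {g : E → E} {K : ℝ≥0} (hg : LipschitzWith K g)
    (a v : E) {t : ℝ} (ht : 0 ≤ t) :
    ⟪g (a + t • v) - g a, v⟫ ≤ K * t * ‖v‖ ^ 2 := by
  have hlip : ‖g (a + t • v) - g a‖ ≤ K * (t * ‖v‖) := by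
    simpa [norm_smul, abs_of_nonneg ht] using hg.norm_sub_le (a + t • v) a
  calc ⟪g (a + t • v) - g a, v⟫ ≤ ‖g (a + t • v) - g a‖ * ‖v‖ := real_inner_le_norm _ _
    _ ≤ K * (t * ‖v‖) * ‖v‖ := by gcongr
    _ = K * t * ‖v‖ ^ 2 := by ring

/-- The descent lemma of smooth optimization. -/
theorem le_add_inner_add_sq_of_lipschitzWith_gradient [CompleteSpace E] {g : E → E} {K : ℝ≥0}
    (hf : ∀ x, HasGradientAt f (g x) x) (hg : LipschitzWith K g) (a v : E) :
    f (a + v) ≤ f a + ⟪g a, v⟫ + K / 2 * ‖v‖ ^ 2 := by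
  have hderiv (t : ℝ) : HasDerivAt (fun s : ℝ => f (a + s • v)) ⟪g (a + t • v), v⟫ t :=
    (hf _).hasDerivAt_comp_add_smul
  have hbound (t : ℝ) : HasDerivAt (fun s : ℝ => f a + s * ⟪g a, v⟫ + K / 2 * s ^ 2 * ‖v‖ ^ 2)
      (⟪g a, v⟫ + K * t * ‖v‖ ^ 2) t :=
    ((((hasDerivAt_id' t).mul_const ⟪g a, v⟫).const_add (f a)).add
      (((hasDerivAt_pow 2 t).const_mul ((K : ℝ) / 2)).mul_const (‖v‖ ^ 2))).congr_deriv (by ring)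
  have key := image_le_of_deriv_right_le_deriv_boundary (a := 0) (b := 1)
    (fun t _ => (hderiv t).continuousAt.continuousWithinAt)
    (fun t _ => (hderiv t).hasDerivWithinAt) (by simp)
    (fun t _ => (hbound t).continuousAt.continuousWithinAt)
    (fun t _ => (hbound t).hasDerivWithinAt)
    (fun t ht => by
      have := inner_sub_le_of_lipschitzWith hg a v ht.1
      rw [inner_sub_left] at this
      linarith)
    (Set.right_mem_Icc.2 zero_le_one)
  simpa using key

theorem scgs_one_step_inequality_general
    {n : ℕ}
    (L γ β : ℝ) (hL : 0 < L)
    (hγ : γ ∈ Set.Icc (0 : ℝ) 1)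
    (f : EuclideanSpace ℝ (Fin n) → ℝ)
    (gf : EuclideanSpace ℝ (Fin n) → EuclideanSpace ℝ (Fin n))
    (hconv : ConvexOn ℝ Set.univ f)
    (hgrad : ∀ x, HasGradientAt f (gf x) x)
    (hLip : LipschitzWith (Real.toNNReal L) gf)
    (x y' y : EuclideanSpace ℝ (Fin n)) :
    f ((1 - γ) • x + γ • y)
      ≤ (1 - γ) * f x
        + γ * (f ((1 - γ) • x + γ • y')
            + ⟪gf ((1 - γ) • x + γ • y'), y - ((1 - γ) • x + γ • y')⟫)
        + (β * γ / 2) * ‖y - y'‖ ^ 2 - (γ * (β - L * γ) / 2) * ‖y - y'‖ ^ 2 := by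
  obtain ⟨hγ0, hγ1⟩ := hγ
  set z := (1 - γ) • x + γ • y'
  have hstep : (1 - γ) • x + γ • y = z + γ • (y - y') := by simp only [z]; module
  have hdescent := le_add_inner_add_sq_of_lipschitzWith_gradient hgrad hLip z (γ • (y - y'))
  have hsplit : ⟪gf z, γ • (y - y')⟫ = (1 - γ) * ⟪gf z, x - z⟫ + γ * ⟪gf z, y - z⟫ := by
    rw [show γ • (y - y') = (1 - γ) • (x - z) + γ • (y - z) by simp only [z]; module,
      inner_add_right, real_inner_smul_right, real_inner_smul_right]
  have hfirst := mul_le_mul_of_nonneg_left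
    (hconv.add_inner_gradient_le (Set.mem_univ z) (Set.mem_univ x) (hgrad z))
    (sub_nonneg.2 hγ1)
  rw [Real.coe_toNNReal L hL.le, norm_smul, Real.norm_of_nonneg hγ0, hsplit] at hdescent
  rw [hstep]
  linarith

/-- One-step inequality of the SCGS proof: with `z_t = (1−γ)x_{t−1} + γ y_{t−1}` and
`x_t = (1−γ)x_{t−1} + γ y_t`, convexity and `L`-smoothness give
`f(x_t) ≤ (1−γ)f(x_{t−1}) + γ[f(z_t) + ⟨∇f(z_t), y_t − z_t⟩]
   + (βγ/2)‖y_t − y_{t−1}‖² − (γ(β − Lγ)/2)‖y_t − y_{t−1}‖²`. -/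
theorem scgs_one_step_inequality
    {n : ℕ} (Ω : Set (EuclideanSpace ℝ (Fin n))) (hΩ : Convex ℝ Ω)
    (D L γ β : ℝ) (hL : 0 < L)
    (hdiam : ∀ a ∈ Ω, ∀ b ∈ Ω, ‖a - b‖ ≤ D)
    (hγ : γ ∈ Set.Icc (0 : ℝ) 1) (hβ : L * γ ≤ β)
    (f : EuclideanSpace ℝ (Fin n) → ℝ)
    (gf : EuclideanSpace ℝ (Fin n) → EuclideanSpace ℝ (Fin n))
    (hconv : ConvexOn ℝ Set.univ f)
    (hgrad : ∀ x, HasGradientAt f (gf x) x)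
    (hLip : LipschitzWith (Real.toNNReal L) gf)
    (x y' y : EuclideanSpace ℝ (Fin n)) (hx : x ∈ Ω) (hy' : y' ∈ Ω) (hy : y ∈ Ω) :
    f ((1 - γ) • x + γ • y)
      ≤ (1 - γ) * f x
        + γ * (f ((1 - γ) • x + γ • y')
            + ⟪gf ((1 - γ) • x + γ • y'), y - ((1 - γ) • x + γ • y')⟫)
        + (β * γ / 2) * ‖y - y'‖ ^ 2 - (γ * (β - L * γ) / 2) * ‖y - y'‖ ^ 2 :=
  scgs_one_step_inequality_general L γ β hL hγ f gf hconv hgrad hLip x y' y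
end
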